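/- For the one-interface transmission problem on the disk with radially symmetric data (mode m = 0), the 2×2 modal system [H₀⁽¹⁾(k₀R) , −J₀(k₁R); k₀H₀⁽¹⁾'(k₀R) , −β k₁ J₀'(k₁R)] has nonzero determinant whenever k₀, k₁, R, β > 0; equivalently β k₁ H₀⁽¹⁾(k₀R) J₀'(k₁R) − k₀ H₀⁽¹⁾'(k₀R) J₀(k₁R) ≠ 0 provided J₀(k₁R) and J₀'(k₁R) are not both zero. -/

import Mathlib

/-- Bessel function of the first kind of nonnegative integer order (real
variable), defined by its power series. -/
noncomputable def realBesselJ (m : ℕ) (x : ℝ) : ℝ :=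
  ∑' j : ℕ, (-1 : ℝ) ^ j / ((j.factorial : ℝ) * ((j + m).factorial : ℝ)) * (x / 2) ^ (2 * j + m)

/-- Bessel function of the second kind of nonnegative integer order (real
variable), defined by its standard series expansion involving the
Euler–Mascheroni constant and harmonic numbers. -/
noncomputable def realBesselY (m : ℕ) (x : ℝ) : ℝ :=
  (2 / Real.pi) * (Real.log (x / 2) + Real.eulerMascheroniConstant) * realBesselJ m x
    - (1 / Real.pi) * ∑ j ∈ Finset.range m,
        (((m - j - 1).factorial : ℝ) / (j.factorial : ℝ)) * (x / 2) ^ (2 * (j : ℤ) - (m : ℤ))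
    - (1 / Real.pi) * ∑' j : ℕ,
        (-1 : ℝ) ^ j * (((harmonic j : ℚ) : ℝ) + ((harmonic (j + m) : ℚ) : ℝ))
          / ((j.factorial : ℝ) * ((j + m).factorial : ℝ)) * (x / 2) ^ (2 * j + m)

open Complex

/-- Hankel function of the first kind of integer order (real variable):
`H_m^{(1)} = J_m + i Y_m`. -/
noncomputable def hankel1 (m : ℕ) (x : ℝ) : ℂ :=
  (realBesselJ m x : ℂ) + Complex.I * (realBesselY m x : ℂ)

/-- Derivative of the Hankel function of the first kind:
`H_m^{(1)'} = J_m' + i Y_m'`. -/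
noncomputable def hankel1Deriv (m : ℕ) (x : ℝ) : ℂ :=
  ((deriv (realBesselJ m) x : ℝ) : ℂ) + Complex.I * ((deriv (realBesselY m) x : ℝ) : ℂ)

/-! In `t = (x / 2) ^ 2`, `J₀` and the non-logarithmic part of `Y₀` are entire power series
`F`, `G` with `(t F')' = -F` and `(t G')' = 2 F' - G`. Hence `t (F G' - F' G) - F ^ 2` has zero
derivative and equals its value `-1` at `t = 0`, which is the Wronskian identity
`J₀ Y₀' - J₀' Y₀ = 2 / (π x)`. Splitting the determinant into real and imaginary parts, its
vanishing says that the real vector `(β k₁ J₀'(k₁R), -k₀ J₀(k₁R))` lies in the kernel of the matrix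
with rows `(J₀, J₀')`, `(Y₀, Y₀')` at `k₀R`, whose determinant is that nonzero Wronskian. -/

open scoped Nat

noncomputable def powerSeriesSum (c : ℕ → ℝ) (t : ℝ) : ℝ := ∑' j, c j * t ^ j

noncomputable def derivCoeff (c : ℕ → ℝ) (j : ℕ) : ℝ := (j + 1) * c (j + 1)

def IsEntireSeries (c : ℕ → ℝ) : Prop := ∀ r : ℝ, 0 ≤ r → Summable fun j => |c j| * r ^ j

namespace IsEntireSeries

variable {c : ℕ → ℝ}

lemma of_abs_le_div_factorial {M : ℝ} (h : ∀ j, |c j| ≤ M / j !) : IsEntireSeries c := by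
  intro r hr
  refine .of_nonneg_of_le (fun j => by positivity) (fun j => ?_)
    ((Real.summable_pow_div_factorial r).mul_left M)
  calc |c j| * r ^ j ≤ M / j ! * r ^ j := by gcongr; exact h j
    _ = M * (r ^ j / j !) := by ring

lemma summable (hc : IsEntireSeries c) (t : ℝ) : Summable fun j => c j * t ^ j :=
  .of_norm_bounded (hc |t| (abs_nonneg t)) fun j => by
    rw [norm_mul, norm_pow, Real.norm_eq_abs, Real.norm_eq_abs]

lemma natCast_mul (hc : IsEntireSeries c) : IsEntireSeries fun j => j * c j := by
  intro r hr
  refine .of_nonneg_of_le (fun j => by positivity) (fun j => ?_) (hc (2 * r) (by positivity))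
  have hj : (j : ℝ) ≤ 2 ^ j := by exact_mod_cast Nat.lt_two_pow_self.le
  calc |(j : ℝ) * c j| * r ^ j = |c j| * (j * r ^ j) := by
        rw [abs_mul, Nat.abs_cast]; ring
    _ ≤ |c j| * (2 ^ j * r ^ j) := by gcongr
    _ = |c j| * (2 * r) ^ j := by rw [mul_pow]

lemma derivCoeff (hc : IsEntireSeries c) : IsEntireSeries (derivCoeff c) := by
  intro r hr
  have hshift := (summable_nat_add_iff 1).mpr (hc.natCast_mul (r + 1) (by positivity))
  refine .of_nonneg_of_le (fun j => by positivity) (fun j => ?_) hshift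
  simp only [_root_.derivCoeff, Nat.cast_add, Nat.cast_one]
  gcongr
  calc r ^ j ≤ (r + 1) ^ j := by gcongr; linarith
    _ ≤ (r + 1) ^ (j + 1) := pow_le_pow_right₀ (by linarith) j.le_succ

lemma hasDerivAt_powerSeriesSum (hc : IsEntireSeries c) (t : ℝ) :
    HasDerivAt (powerSeriesSum c) (powerSeriesSum (_root_.derivCoeff c) t) t := by
  set ρ := |t| + 1
  have hρ : 1 ≤ ρ := by simp [ρ]
  have ht : t ∈ Set.Ioo (-ρ) ρ := abs_lt.mp (by simp [ρ])
  have hbound : ∀ j, ∀ y ∈ Set.Ioo (-ρ) ρ,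
      ‖c j * (j * y ^ (j - 1))‖ ≤ |(j : ℝ) * c j| * ρ ^ j := by
    intro j y hy
    have hy : |y| ≤ ρ := (abs_lt.mpr hy).le
    calc ‖c j * (j * y ^ (j - 1))‖ = |(j : ℝ) * c j| * |y| ^ (j - 1) := by
          simp only [norm_mul, norm_pow, Real.norm_eq_abs, abs_mul, Nat.abs_cast]; ring
      _ ≤ |(j : ℝ) * c j| * ρ ^ (j - 1) := by gcongr
      _ ≤ |(j : ℝ) * c j| * ρ ^ j := by gcongr; exact j.sub_le 1
  have hsum := hc.natCast_mul ρ (by positivity)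
  have hderiv := hasDerivAt_tsum_of_isPreconnected hsum isOpen_Ioo
    (convex_Ioo _ _).isPreconnected (fun j y _ => (hasDerivAt_pow j y).const_mul (c j))
    hbound ht (hc.summable t) ht
  refine hderiv.congr_deriv ?_
  rw [(Summable.of_norm_bounded hsum fun j => hbound j t ht).tsum_eq_zero_add]
  simp only [powerSeriesSum, _root_.derivCoeff, Nat.cast_zero, zero_mul, mul_zero, zero_add,
    Nat.add_sub_cancel, Nat.cast_succ]
  exact tsum_congr fun j => by ring

lemma mul_powerSeriesSum_derivCoeff (hc : IsEntireSeries c) (t : ℝ) :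
    t * powerSeriesSum (_root_.derivCoeff c) t = powerSeriesSum (fun j => j * c j) t := by
  rw [powerSeriesSum, powerSeriesSum, (hc.natCast_mul.summable t).tsum_eq_zero_add,
    ← tsum_mul_left]
  simp only [_root_.derivCoeff, Nat.cast_zero, zero_mul, zero_add, Nat.cast_succ]
  exact tsum_congr fun j => by ring

lemma hasDerivAt_mul_powerSeriesSum_derivCoeff (hc : IsEntireSeries c) (t : ℝ) :
    HasDerivAt (fun s => s * powerSeriesSum (_root_.derivCoeff c) s)
      (powerSeriesSum (_root_.derivCoeff fun j => j * c j) t) t := by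
  simp only [hc.mul_powerSeriesSum_derivCoeff]
  exact hc.natCast_mul.hasDerivAt_powerSeriesSum t

end IsEntireSeries

lemma powerSeriesSum_zero (c : ℕ → ℝ) : powerSeriesSum c 0 = c 0 := by
  rw [powerSeriesSum, tsum_eq_single 0 fun j hj => by simp [hj]]
  simp

lemma harmonic_le_self (n : ℕ) : harmonic n ≤ n := by
  simpa [harmonic] using
    Finset.sum_le_card_nsmul (Finset.range n) (fun i => ((i + 1 : ℕ) : ℚ)⁻¹) 1 fun i _ =>
      inv_le_one_of_one_le₀ (by exact_mod_cast i.succ_pos)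

noncomputable def besselJCoeff (j : ℕ) : ℝ := (-1) ^ j / (j ! * j !)

noncomputable def besselYCoeff (j : ℕ) : ℝ := (-1) ^ j * (2 * harmonic j) / (j ! * j !)

lemma isEntireSeries_besselJCoeff : IsEntireSeries besselJCoeff := by
  refine .of_abs_le_div_factorial (M := 1) fun j => ?_
  have : (1 : ℝ) ≤ j ! := by exact_mod_cast j.factorial_pos
  rw [besselJCoeff, abs_div, abs_pow, abs_neg, abs_one, one_pow, abs_of_pos (by positivity)]
  exact one_div_le_one_div_of_le (by positivity) (le_mul_of_one_le_right (by positivity) this)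

lemma isEntireSeries_besselYCoeff : IsEntireSeries besselYCoeff := by
  refine .of_abs_le_div_factorial (M := 2) fun j => ?_
  have hH : ((harmonic j : ℚ) : ℝ) ≤ j ! := by
    calc ((harmonic j : ℚ) : ℝ) ≤ j := by exact_mod_cast harmonic_le_self j
      _ ≤ j ! := by exact_mod_cast j.self_le_factorial
  have hH0 : (0 : ℝ) ≤ harmonic j := by rw [harmonic]; positivity
  rw [besselYCoeff, abs_div, abs_mul, abs_pow, abs_neg, abs_one, one_pow, one_mul,
    abs_of_nonneg (by positivity), abs_of_pos (by positivity), div_le_div_iff₀ (by positivity)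
    (by positivity)]
  nlinarith [Nat.factorial_pos j]

lemma derivCoeff_natCast_mul_besselJCoeff (j : ℕ) :
    derivCoeff (fun j => j * besselJCoeff j) j = -besselJCoeff j := by
  simp only [derivCoeff, besselJCoeff, Nat.factorial_succ, Nat.cast_mul, Nat.cast_succ, pow_succ]
  field_simp

lemma derivCoeff_natCast_mul_besselYCoeff (j : ℕ) :
    derivCoeff (fun j => j * besselYCoeff j) j
      = 2 * derivCoeff besselJCoeff j - besselYCoeff j := by
  simp only [derivCoeff, besselJCoeff, besselYCoeff, harmonic_succ, Nat.factorial_succ,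
    Nat.cast_mul, Nat.cast_succ, Rat.cast_add, Rat.cast_inv, Rat.cast_natCast, pow_succ]
  field_simp
  ring

lemma hasDerivAt_mul_powerSeriesSum_derivCoeff_besselJCoeff (t : ℝ) :
    HasDerivAt (fun s => s * powerSeriesSum (derivCoeff besselJCoeff) s)
      (-powerSeriesSum besselJCoeff t) t := by
  convert isEntireSeries_besselJCoeff.hasDerivAt_mul_powerSeriesSum_derivCoeff t using 1
  simp only [powerSeriesSum, derivCoeff_natCast_mul_besselJCoeff, neg_mul, tsum_neg]

lemma hasDerivAt_mul_powerSeriesSum_derivCoeff_besselYCoeff (t : ℝ) :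
    HasDerivAt (fun s => s * powerSeriesSum (derivCoeff besselYCoeff) s)
      (2 * powerSeriesSum (derivCoeff besselJCoeff) t - powerSeriesSum besselYCoeff t) t := by
  convert isEntireSeries_besselYCoeff.hasDerivAt_mul_powerSeriesSum_derivCoeff t using 1
  simp only [powerSeriesSum, derivCoeff_natCast_mul_besselYCoeff, sub_mul, mul_assoc]
  rw [Summable.tsum_sub ((isEntireSeries_besselJCoeff.derivCoeff.summable t).mul_left 2)
    (isEntireSeries_besselYCoeff.summable t), tsum_mul_left]

lemma mul_besselSeries_wronskian (t : ℝ) :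
    t * (powerSeriesSum besselJCoeff t * powerSeriesSum (derivCoeff besselYCoeff) t
      - powerSeriesSum (derivCoeff besselJCoeff) t * powerSeriesSum besselYCoeff t)
      = powerSeriesSum besselJCoeff t ^ 2 - 1 := by
  set F := powerSeriesSum besselJCoeff
  set G := powerSeriesSum besselYCoeff
  set F₁ := powerSeriesSum (derivCoeff besselJCoeff)
  set G₁ := powerSeriesSum (derivCoeff besselYCoeff)
  let Φ s := F s * (s * G₁ s) - s * F₁ s * G s - F s ^ 2
  have hΦ (s : ℝ) : HasDerivAt Φ 0 s := by
    have hF := isEntireSeries_besselJCoeff.hasDerivAt_powerSeriesSum s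
    have hG := isEntireSeries_besselYCoeff.hasDerivAt_powerSeriesSum s
    refine (((hF.mul (hasDerivAt_mul_powerSeriesSum_derivCoeff_besselYCoeff s)).sub
      ((hasDerivAt_mul_powerSeriesSum_derivCoeff_besselJCoeff s).mul hG)).sub
      (hF.pow 2)).congr_deriv ?_
    push_cast
    ring
  have hconst : Φ t = Φ 0 :=
    is_const_of_deriv_eq_zero (fun s => (hΦ s).differentiableAt) (fun s => (hΦ s).deriv) t 0
  have hF0 : F 0 = 1 := by simp [F, powerSeriesSum_zero, besselJCoeff]
  simp only [Φ, hF0, zero_mul, mul_zero, sub_zero] at hconst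
  linear_combination hconst

lemma realBesselJ_zero_eq (x : ℝ) :
    realBesselJ 0 x = powerSeriesSum besselJCoeff ((x / 2) ^ 2) := by
  simp only [realBesselJ, powerSeriesSum, besselJCoeff, add_zero, pow_mul]

lemma realBesselY_zero_eq (x : ℝ) :
    realBesselY 0 x = 2 / Real.pi * (Real.log (x / 2) + Real.eulerMascheroniConstant)
      * powerSeriesSum besselJCoeff ((x / 2) ^ 2)
      - 1 / Real.pi * powerSeriesSum besselYCoeff ((x / 2) ^ 2) := by
  simp only [realBesselY, realBesselJ_zero_eq, Finset.range_zero, Finset.sum_empty, mul_zero,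
    sub_zero, powerSeriesSum, besselYCoeff, add_zero, pow_mul]
  congr 3 with j
  ring

lemma hasDerivAt_half_sq (x : ℝ) : HasDerivAt (fun x => (x / 2) ^ 2) (x / 2) x := by
  refine (((hasDerivAt_id x).div_const 2).pow 2).congr_deriv ?_
  simp only [id, Nat.cast_ofNat]
  ring

lemma hasDerivAt_realBesselJ_zero (x : ℝ) :
    HasDerivAt (realBesselJ 0)
      (powerSeriesSum (derivCoeff besselJCoeff) ((x / 2) ^ 2) * (x / 2)) x := by
  rw [funext realBesselJ_zero_eq]
  exact (isEntireSeries_besselJCoeff.hasDerivAt_powerSeriesSum _).comp x (hasDerivAt_half_sq x)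

lemma hasDerivAt_realBesselY_zero {x : ℝ} (hx : x ≠ 0) :
    HasDerivAt (realBesselY 0)
      (2 / Real.pi * (1 / x * powerSeriesSum besselJCoeff ((x / 2) ^ 2)
          + (Real.log (x / 2) + Real.eulerMascheroniConstant)
            * (powerSeriesSum (derivCoeff besselJCoeff) ((x / 2) ^ 2) * (x / 2)))
        - 1 / Real.pi * (powerSeriesSum (derivCoeff besselYCoeff) ((x / 2) ^ 2) * (x / 2))) x := by
  rw [funext realBesselY_zero_eq]
  have hlog : HasDerivAt (fun x => Real.log (x / 2) + Real.eulerMascheroniConstant) (1 / x) x :=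
    (((Real.hasDerivAt_log (by simpa using hx)).comp x ((hasDerivAt_id x).div_const 2)).add_const
      _).congr_deriv (by simp only [id]; field_simp)
  have hJ := (isEntireSeries_besselJCoeff.hasDerivAt_powerSeriesSum _).comp x (hasDerivAt_half_sq x)
  have hY := (isEntireSeries_besselYCoeff.hasDerivAt_powerSeriesSum _).comp x (hasDerivAt_half_sq x)
  refine (((hlog.const_mul (2 / Real.pi)).mul hJ).sub (hY.const_mul (1 / Real.pi))).congr_deriv ?_
  simp only [Function.comp_apply]
  ring

lemma realBesselJ_zero_mul_deriv_sub_deriv_mul_realBesselY_zero {x : ℝ} (hx : x ≠ 0) :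
    realBesselJ 0 x * deriv (realBesselY 0) x - deriv (realBesselJ 0) x * realBesselY 0 x
      = 2 / (Real.pi * x) := by
  rw [(hasDerivAt_realBesselJ_zero x).deriv, (hasDerivAt_realBesselY_zero hx).deriv,
    realBesselJ_zero_eq, realBesselY_zero_eq]
  have key := mul_besselSeries_wronskian ((x / 2) ^ 2)
  generalize powerSeriesSum besselJCoeff ((x / 2) ^ 2) = F at key ⊢
  generalize powerSeriesSum besselYCoeff ((x / 2) ^ 2) = G at key ⊢
  generalize powerSeriesSum (derivCoeff besselJCoeff) ((x / 2) ^ 2) = F₁ at key ⊢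
  generalize powerSeriesSum (derivCoeff besselYCoeff) ((x / 2) ^ 2) = G₁ at key ⊢
  field_simp
  linear_combination (-4) * key

lemma Complex.eq_zero_of_ofReal_mul_add_ofReal_mul_eq_zero {z w : ℂ}
    (hzw : z.re * w.im - w.re * z.im ≠ 0) {a b : ℝ} (h : (a : ℂ) * z + b * w = 0) :
    a = 0 ∧ b = 0 := by
  have hre : a * z.re + b * w.re = 0 := by simpa using congrArg Complex.re h
  have him : a * z.im + b * w.im = 0 := by simpa using congrArg Complex.im h
  constructor
  · exact (mul_eq_zero.mp (by linear_combination w.im * hre - w.re * him :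
      a * (z.re * w.im - w.re * z.im) = 0)).resolve_right hzw
  · exact (mul_eq_zero.mp (by linear_combination z.re * him - z.im * hre :
      b * (z.re * w.im - w.re * z.im) = 0)).resolve_right hzw

/-- Nondegeneracy of the `m = 0` modal system for the one-interface
transmission problem on the disk: if `J₀(k₁R)` and `J₀'(k₁R)` are not both
zero, then the determinant
`β k₁ H₀⁽¹⁾(k₀R) J₀'(k₁R) − k₀ H₀⁽¹⁾'(k₀R) J₀(k₁R)` is nonzero. -/
theorem modal_determinant_ne_zero (k₀ k₁ R β : ℝ)
    (hk₀ : 0 < k₀) (hk₁ : 0 < k₁) (hR : 0 < R) (hβ : 0 < β)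
    (hnd : ¬(realBesselJ 0 (k₁ * R) = 0 ∧ deriv (realBesselJ 0) (k₁ * R) = 0)) :
    (β : ℂ) * (k₁ : ℂ) * hankel1 0 (k₀ * R) * ((deriv (realBesselJ 0) (k₁ * R) : ℝ) : ℂ)
        - (k₀ : ℂ) * hankel1Deriv 0 (k₀ * R) * ((realBesselJ 0 (k₁ * R) : ℝ) : ℂ) ≠ 0 := by
  intro hdet
  have hW : (hankel1 0 (k₀ * R)).re * (hankel1Deriv 0 (k₀ * R)).im
      - (hankel1Deriv 0 (k₀ * R)).re * (hankel1 0 (k₀ * R)).im = 2 / (Real.pi * (k₀ * R)) := by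
    simpa [hankel1, hankel1Deriv] using
      realBesselJ_zero_mul_deriv_sub_deriv_mul_realBesselY_zero (by positivity : k₀ * R ≠ 0)
  obtain ⟨hB, hA⟩ := Complex.eq_zero_of_ofReal_mul_add_ofReal_mul_eq_zero
    (z := hankel1 0 (k₀ * R)) (w := hankel1Deriv 0 (k₀ * R))
    (a := β * k₁ * deriv (realBesselJ 0) (k₁ * R)) (b := -(k₀ * realBesselJ 0 (k₁ * R)))
    (by rw [hW]; positivity) (by push_cast; linear_combination hdet)
  exact hnd ⟨by simpa [hk₀.ne'] using hA, by simpa [hβ.ne', hk₁.ne'] using hB⟩
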